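/- arXiv:1407.1233 — 3 statements merged into one kernel-verified Lean document; each statement's English description precedes it below -/
import Mathlib

section
/- The highest alignment procedure applied to two sequences X_1…X_n and Y_1…Y_n produces an optimal alignment {(i^h_1,j^h_1),…,(i^h_k,j^h_k)} with k = L_n, and its pairs satisfy, for every t = 1,…,k: j^h_t = max{ j^α_t : α an optimal alignment } and i^h_t = min{ i^α_t : α an optimal alignment with j^α_t = j^h_t }. -/
open MeasureTheory ProbabilityTheory Filter Set
open scoped ENNReal NNReal Topology

noncomputable section

namespace PaperLCS

/-- The binary entropy function `h(x) = -x log₂ x - (1-x) log₂ (1-x)`. -/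
def binEnt (x : ℝ) : ℝ := -x * Real.logb 2 x - (1 - x) * Real.logb 2 (1 - x)

variable {A : Type*}

/-- `(i, j)` is an alignment of the sequences `X₁ … X_{nx}` and `Y₁ … Y_{ny}`
(1-based indexing) of length `k`. -/
def IsAlignment (X Y : ℕ → A) (nx ny k : ℕ) (i j : Fin k → ℕ) : Prop :=
  StrictMono i ∧ StrictMono j ∧
    (∀ t, 1 ≤ i t ∧ i t ≤ nx) ∧ (∀ t, 1 ≤ j t ∧ j t ≤ ny) ∧
    ∀ t, X (i t) = Y (j t)

/-- `L(X₁…X_{nx}; Y₁…Y_{ny})`, the length of the longest common subsequence. -/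
def lcsLen (X Y : ℕ → A) (nx ny : ℕ) : ℕ :=
  sSup {k | ∃ i j : Fin k → ℕ, IsAlignment X Y nx ny k i j}

/-- An optimal alignment: an alignment of maximal length. -/
def IsOptimal (X Y : ℕ → A) (nx ny k : ℕ) (i j : Fin k → ℕ) : Prop :=
  IsAlignment X Y nx ny k i j ∧ k = lcsLen X Y nx ny

/-- The highest alignment: the optimal alignment such that for every `t`,
`j t` is maximal among all optimal alignments, and `i t` is minimal among the optimal
alignments attaining this maximal `j t`. -/
def IsHighest (X Y : ℕ → A) (nx ny k : ℕ) (i j : Fin k → ℕ) : Prop :=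
  IsOptimal X Y nx ny k i j ∧
    ∀ i' j' : Fin k → ℕ, IsOptimal X Y nx ny k i' j' →
      ∀ t, j' t ≤ j t ∧ (j' t = j t → i t ≤ i' t)

/-- The lowest alignment. -/
def IsLowest (X Y : ℕ → A) (nx ny k : ℕ) (i j : Fin k → ℕ) : Prop :=
  IsOptimal X Y nx ny k i j ∧
    ∀ i' j' : Fin k → ℕ, IsOptimal X Y nx ny k i' j' →
      ∀ t, j t ≤ j' t ∧ (j' t = j t → i' t ≤ i t)

/-- The left-most (nord-west) alignment. -/
def IsLeftmost (X Y : ℕ → A) (nx ny k : ℕ) (i j : Fin k → ℕ) : Prop :=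
  IsOptimal X Y nx ny k i j ∧
    ∀ i' j' : Fin k → ℕ, IsOptimal X Y nx ny k i' j' →
      ∀ t, i t ≤ i' t ∧ (i' t = i t → j' t ≤ j t)


lemma align_len_le {X Y : ℕ → A} {nx ny k : ℕ} {i j : Fin k → ℕ}
    (h : IsAlignment X Y nx ny k i j) : k ≤ nx := by
  obtain ⟨hi, -, hb, -, -⟩ := h
  have : (Finset.univ : Finset (Fin k)).card ≤ (Finset.Icc 1 nx).card := by
    apply Finset.card_le_card_of_injOn i
    · intro t _; exact Finset.mem_Icc.2 ⟨(hb t).1, (hb t).2⟩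
    · intro a _ b _ hab; exact hi.injective hab
  simpa [Nat.card_Icc] using this

lemma lcs_bddAbove (X Y : ℕ → A) (nx ny : ℕ) :
    BddAbove {k | ∃ i j : Fin k → ℕ, IsAlignment X Y nx ny k i j} := by
  refine ⟨nx, ?_⟩
  rintro k ⟨i, j, h⟩
  exact align_len_le h

lemma zero_mem_align (X Y : ℕ → A) (nx ny : ℕ) :
    0 ∈ {k | ∃ i j : Fin k → ℕ, IsAlignment X Y nx ny k i j} :=
  ⟨Fin.elim0, Fin.elim0,
    fun a => a.elim0, fun a => a.elim0, fun t => t.elim0, fun t => t.elim0, fun t => t.elim0⟩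

lemma lcs_mem (X Y : ℕ → A) (nx ny : ℕ) :
    ∃ i j : Fin (lcsLen X Y nx ny) → ℕ, IsAlignment X Y nx ny (lcsLen X Y nx ny) i j :=
  Nat.sSup_mem ⟨0, zero_mem_align X Y nx ny⟩ (lcs_bddAbove X Y nx ny)

lemma no_cross {X Y : ℕ → A} {n k : ℕ} (hk : k = lcsLen X Y n n)
    {ia ja ib jb : Fin k → ℕ}
    (ha : IsAlignment X Y n n k ia ja) (hb : IsAlignment X Y n n k ib jb)
    {t t' : Fin k} (htt : t < t') (hj : jb t < ja t) (hi : ib t' ≤ ia t) : False := by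
  obtain ⟨hia, hja, hbia, hbja, hma⟩ := ha
  obtain ⟨hib, hjb, hbib, hbjb, hmb⟩ := hb
  have hk1 : 0 < k := t.pos
  have hlt : ib t < ia t := lt_of_lt_of_le (hib htt) hi
  set di : Fin (k+1) → ℕ := fun s =>
    if h : s.val ≤ t.val then ib ⟨s.val, lt_of_le_of_lt h t.isLt⟩
    else ia ⟨s.val - 1, by have := s.isLt; omega⟩ with hdi
  set dj : Fin (k+1) → ℕ := fun s =>
    if h : s.val ≤ t.val then jb ⟨s.val, lt_of_le_of_lt h t.isLt⟩
    else ja ⟨s.val - 1, by have := s.isLt; omega⟩ with hdj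
  have halg : IsAlignment X Y n n (k+1) di dj := by
    refine ⟨?_, ?_, ?_, ?_, ?_⟩
    · intro a b hab
      have hab' : a.val < b.val := hab
      simp only [hdi]
      by_cases hA : a.val ≤ t.val <;> by_cases hB : b.val ≤ t.val
      · rw [dif_pos hA, dif_pos hB]; exact hib (by exact hab')
      · rw [dif_pos hA, dif_neg hB]
        have h1 : ib ⟨a.val, lt_of_le_of_lt hA t.isLt⟩ ≤ ib t :=
          hib.monotone (by simp [Fin.le_def, hA])
        have h2 : ia t ≤ ia ⟨b.val - 1, by have := b.isLt; omega⟩ :=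
          hia.monotone (by simp [Fin.le_def]; omega)
        exact lt_of_le_of_lt h1 (lt_of_lt_of_le hlt h2)
      · omega
      · rw [dif_neg hA, dif_neg hB]
        exact hia (by simp [Fin.lt_def]; omega)
    · intro a b hab
      have hab' : a.val < b.val := hab
      simp only [hdj]
      by_cases hA : a.val ≤ t.val <;> by_cases hB : b.val ≤ t.val
      · rw [dif_pos hA, dif_pos hB]; exact hjb (by exact hab')
      · rw [dif_pos hA, dif_neg hB]
        have h1 : jb ⟨a.val, lt_of_le_of_lt hA t.isLt⟩ ≤ jb t :=
          hjb.monotone (by simp [Fin.le_def, hA])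
        have h2 : ja t ≤ ja ⟨b.val - 1, by have := b.isLt; omega⟩ :=
          hja.monotone (by simp [Fin.le_def]; omega)
        exact lt_of_le_of_lt h1 (lt_of_lt_of_le hj h2)
      · omega
      · rw [dif_neg hA, dif_neg hB]
        exact hja (by simp [Fin.lt_def]; omega)
    · intro s
      simp only [hdi]
      by_cases hA : s.val ≤ t.val
      · rw [dif_pos hA]; exact hbib _
      · rw [dif_neg hA]; exact hbia _
    · intro s
      simp only [hdj]
      by_cases hA : s.val ≤ t.val
      · rw [dif_pos hA]; exact hbjb _
      · rw [dif_neg hA]; exact hbja _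
    · intro s
      simp only [hdi, hdj]
      by_cases hA : s.val ≤ t.val
      · rw [dif_pos hA, dif_pos hA]; exact hmb _
      · rw [dif_neg hA, dif_neg hA]; exact hma _
  have hmem : k + 1 ∈ {m | ∃ i j : Fin m → ℕ, IsAlignment X Y n n m i j} :=
    ⟨di, dj, halg⟩
  have := le_csSup (lcs_bddAbove X Y n n) hmem
  rw [← lcsLen, ← hk] at this
  omega

lemma join {X Y : ℕ → A} {n k : ℕ} (hk : k = lcsLen X Y n n)
    {ia ja ib jb : Fin k → ℕ}
    (ha : IsAlignment X Y n n k ia ja) (hb : IsAlignment X Y n n k ib jb) :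
    ∃ ic jc : Fin k → ℕ, IsAlignment X Y n n k ic jc ∧
      (∀ t, jc t = max (ja t) (jb t)) ∧
      (∀ t, jc t = ja t → ic t ≤ ia t) ∧
      (∀ t, jc t = jb t → ic t ≤ ib t) := by
  obtain ⟨hia, hja, hbia, hbja, hma⟩ := ha
  obtain ⟨hib, hjb, hbib, hbjb, hmb⟩ := hb
  set ic : Fin k → ℕ := fun t =>
    if ja t < jb t then ib t else if jb t < ja t then ia t else min (ia t) (ib t) with hic
  set jc : Fin k → ℕ := fun t => max (ja t) (jb t) with hjc
  have ha' : IsAlignment X Y n n k ia ja := ⟨hia, hja, hbia, hbja, hma⟩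
  have hb' : IsAlignment X Y n n k ib jb := ⟨hib, hjb, hbib, hbjb, hmb⟩
  have hic_or : ∀ t, ic t = ia t ∨ ic t = ib t := by
    intro t
    simp only [hic]
    split_ifs with h1 h2
    · right; rfl
    · left; rfl
    · exact min_choice _ _
  refine ⟨ic, jc, ⟨?_, ?_, ?_, ?_, ?_⟩, fun t => rfl, ?_, ?_⟩
  · -- StrictMono ic
    intro t t' htt
    by_contra hcon
    push_neg at hcon
    -- hcon : ic t' ≤ ic t
    -- source at t': ic t' = ia t' or ib t'
    rcases hic_or t' with hS | hS <;> rw [hS] at hcon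
    · -- S = a : ia t' ≤ ic t
      rcases lt_trichotomy (ja t) (jb t) with h1 | h1 | h1
      · -- T = b, ic t = ib t
        have : ic t = ib t := by simp only [hic]; rw [if_pos h1]
        rw [this] at hcon
        exact no_cross hk hb' ha' htt h1 hcon
      · -- tie, ic t = min ≤ ia t
        have : ic t ≤ ia t := by
          simp only [hic]; rw [if_neg (by omega), if_neg (by omega)]; exact min_le_left _ _
        exact absurd (hia htt) (by omega)
      · -- T = a
        have : ic t = ia t := by simp only [hic]; rw [if_neg (by omega), if_pos h1]
        rw [this] at hcon
        exact absurd (hia htt) (by omega)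
    · -- S = b : ib t' ≤ ic t
      rcases lt_trichotomy (ja t) (jb t) with h1 | h1 | h1
      · have : ic t = ib t := by simp only [hic]; rw [if_pos h1]
        rw [this] at hcon
        exact absurd (hib htt) (by omega)
      · have : ic t ≤ ib t := by
          simp only [hic]; rw [if_neg (by omega), if_neg (by omega)]; exact min_le_right _ _
        exact absurd (hib htt) (by omega)
      · have : ic t = ia t := by simp only [hic]; rw [if_neg (by omega), if_pos h1]
        rw [this] at hcon
        exact no_cross hk ha' hb' htt h1 hcon
  · -- StrictMono jc
    intro t t' htt
    exact max_lt_max (hja htt) (hjb htt)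
  · -- bounds i
    intro t
    rcases hic_or t with h | h <;> rw [h]
    · exact hbia t
    · exact hbib t
  · -- bounds j
    intro t
    constructor
    · exact le_trans (hbja t).1 (le_max_left _ _)
    · exact max_le (hbja t).2 (hbjb t).2
  · -- matches
    intro t
    simp only [hic, hjc]
    rcases lt_trichotomy (ja t) (jb t) with h1 | h1 | h1
    · rw [if_pos h1, max_eq_right h1.le]; exact hmb t
    · rw [if_neg (by omega), if_neg (by omega), h1, max_self]
      rcases min_choice (ia t) (ib t) with h | h <;> rw [h]
      · rw [← h1]; exact hma t
      · exact hmb t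
    · rw [if_neg (by omega), if_pos h1, max_eq_left h1.le]; exact hma t
  · -- jc = ja → ic ≤ ia
    intro t h
    have hba : jb t ≤ ja t := by
      have h2 : jb t ≤ jc t := le_max_right _ _
      omega
    simp only [hic]
    rcases eq_or_lt_of_le hba with h2 | h2
    · rw [if_neg (by omega), if_neg (by omega)]; exact min_le_left _ _
    · rw [if_neg (by omega), if_pos h2]
  · -- jc = jb → ic ≤ ib
    intro t h
    have hba : ja t ≤ jb t := by
      have h2 : ja t ≤ jc t := le_max_left _ _
      omega
    simp only [hic]
    rcases eq_or_lt_of_le hba with h2 | h2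
    · rw [if_neg (by omega), if_neg (by omega)]; exact min_le_right _ _
    · rw [if_pos h2]

/-- Potential function for the maximization argument. -/
noncomputable def psi (n k : ℕ) (i j : Fin k → ℕ) : ℕ :=
  ∑ t, ((n + 1) * j t + (n + 1 - i t))

/-- The highest alignment procedure applied to two sequences
`X₁ … X_n` and `Y₁ … Y_n` produces an optimal alignment (of length `k = L_n`)
whose pairs satisfy, for every `t`:
`j^h_t = max { jᵅ_t : α optimal }` and
`i^h_t = min { iᵅ_t : α optimal, jᵅ_t = j^h_t }`. -/
theorem highest_alignment_exists {A : Type*} [Fintype A] (X Y : ℕ → A) (n : ℕ) :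
    ∃ i j : Fin (lcsLen X Y n n) → ℕ, IsHighest X Y n n (lcsLen X Y n n) i j := by
  set k := lcsLen X Y n n with hk
  obtain ⟨i0, j0, h0⟩ := lcs_mem X Y n n
  set T : Set ℕ := {m | ∃ i j : Fin k → ℕ, IsOptimal X Y n n k i j ∧ psi n k i j = m} with hT
  have hTne : T.Nonempty := ⟨psi n k i0 j0, i0, j0, ⟨h0, hk⟩, rfl⟩
  have hTbdd : BddAbove T := by
    refine ⟨k * ((n + 1) * n + (n + 1)), ?_⟩
    rintro m ⟨i, j, ⟨⟨-, -, hbi, hbj, -⟩, -⟩, rfl⟩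
    calc psi n k i j ≤ ∑ _t : Fin k, ((n + 1) * n + (n + 1)) := by
          apply Finset.sum_le_sum
          intro t _
          have h1 := (hbj t).2
          have h2 : (n + 1) * j t ≤ (n + 1) * n := Nat.mul_le_mul_left _ h1
          omega
      _ = k * ((n + 1) * n + (n + 1)) := by
          simp [Finset.sum_const, Finset.card_univ]
  obtain ⟨ia, ja, haopt, hpa⟩ := Nat.sSup_mem hTne hTbdd
  refine ⟨ia, ja, haopt, ?_⟩
  intro i' j' hopt' t
  by_contra hcon
  push_neg at hcon
  obtain ⟨ic, jc, hcal, hmax, hda, hdb⟩ := join hk haopt.1 hopt'.1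
  have hcmem : psi n k ic jc ∈ T := ⟨ic, jc, ⟨hcal, hk⟩, rfl⟩
  have hle : psi n k ic jc ≤ psi n k ia ja := by
    rw [hpa]; exact le_csSup hTbdd hcmem
  have hlt : psi n k ia ja < psi n k ic jc := by
    apply Finset.sum_lt_sum
    · intro s _
      have h1 : ja s ≤ jc s := by rw [hmax s]; exact le_max_left _ _
      rcases eq_or_lt_of_le h1 with h2 | h2
      · have h3 := hda s h2.symm
        rw [← h2]
        omega
      · have h5 : (n + 1) * (ja s + 1) ≤ (n + 1) * jc s := Nat.mul_le_mul_left _ h2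
        have h6 : 1 ≤ ia s := (haopt.1.2.2.1 s).1
        calc (n + 1) * ja s + (n + 1 - ia s) ≤ (n + 1) * ja s + (n + 1) := by omega
          _ = (n + 1) * (ja s + 1) := by ring
          _ ≤ (n + 1) * jc s := h5
          _ ≤ (n + 1) * jc s + (n + 1 - ic s) := Nat.le_add_right _ _
    · refine ⟨t, Finset.mem_univ t, ?_⟩
      by_cases hle2 : j' t ≤ ja t
      · obtain ⟨heq, hilt⟩ := hcon hle2
        have hjc : jc t = ja t := by rw [hmax t, heq]; exact max_self _
        have h3 : ic t ≤ i' t := hdb t (by rw [hjc, heq])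
        have h6 : 1 ≤ ia t := (haopt.1.2.2.1 t).1
        have h7 : ia t ≤ n := (haopt.1.2.2.1 t).2
        rw [hjc]
        have : ic t < ia t := lt_of_le_of_lt h3 hilt
        omega
      · push_neg at hle2
        have h2 : ja t < jc t := by rw [hmax t]; exact lt_of_lt_of_le hle2 (le_max_right _ _)
        have h5 : (n + 1) * (ja t + 1) ≤ (n + 1) * jc t := Nat.mul_le_mul_left _ h2
        have h6 : 1 ≤ ia t := (haopt.1.2.2.1 t).1
        calc (n + 1) * ja t + (n + 1 - ia t) < (n + 1) * ja t + (n + 1) := by omega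
          _ = (n + 1) * (ja t + 1) := by ring
          _ ≤ (n + 1) * jc t := h5
          _ ≤ (n + 1) * jc t + (n + 1 - ic t) := Nat.le_add_right _ _
  omega

end PaperLCS
end
end

section
/- The highest alignment {(i^h_1,j^h_1),…,(i^h_k,j^h_k)} of X_1…X_n and Y_1…Y_n satisfies: (1) X_{i^h_t} = Y_{j^h_t} for t = 1,…,k; (2) Y_{j^h_t} ≠ Y_j for j^h_t < j < j^h_{t+1}, t = 1,…,k−1; (3) Y_{j^h_k} ≠ Y_j for j^h_k < j ≤ n; (4) X_{i^h_t} ≠ X_i for i^h_{t−1} < i < i^h_t, t = 2,…,k; (5) X_{i^h_1} ≠ X_i for 1 ≤ i < i^h_1; (6) if i^h_1 > 1 then X_1 ≠ Y_j for 1 ≤ j < j^h_1; (7) if j^h_1 > 1 then Y_1 ≠ X_i for 1 ≤ i < i^h_1; (8) if n > j^h_k then Y_n ≠ X_i for i^h_k < i ≤ n; (9) if n > i^h_k then X_n ≠ Y_j for j^h_k < j ≤ n. -/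
open MeasureTheory ProbabilityTheory Filter Set
open scoped ENNReal NNReal Topology

noncomputable section

namespace PaperLCS

variable {A : Type*}

lemma align_le {A : Type*} {X Y : ℕ → A} {nx ny k : ℕ} {i j : Fin k → ℕ}
    (h : IsAlignment X Y nx ny k i j) : k ≤ nx := by
  rcases Nat.eq_zero_or_pos k with hk | hk
  · omega
  obtain ⟨hi, _, hib, _, _⟩ := h
  have key : ∀ m, ∀ t : Fin k, t.val = m → m + 1 ≤ i t := by
    intro m
    induction m with
    | zero => intro t _; exact (hib t).1
    | succ m ih =>
        intro t htv
        have hmk : m < k := by omega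
        have h1 : i ⟨m, hmk⟩ < i t := hi (by simp [Fin.lt_def, htv])
        have := ih ⟨m, hmk⟩ rfl
        omega
  have h1 := key (k - 1) ⟨k - 1, Nat.sub_lt hk Nat.one_pos⟩ rfl
  have h2 := (hib ⟨k - 1, Nat.sub_lt hk Nat.one_pos⟩).2
  omega

lemma le_lcsLen {A : Type*} {X Y : ℕ → A} {nx ny m : ℕ} {i j : Fin m → ℕ}
    (h : IsAlignment X Y nx ny m i j) : m ≤ lcsLen X Y nx ny := by
  apply le_csSup
  · exact ⟨nx, fun m' hm' => by obtain ⟨i', j', h'⟩ := hm'; exact align_le h'⟩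
  · exact ⟨i, j, h⟩

lemma strictMono_cons {k : ℕ} {f : Fin k → ℕ} (hf : StrictMono f) {a : ℕ}
    (ha : ∀ t, a < f t) : StrictMono (Fin.cons a f : Fin (k + 1) → ℕ) := by
  intro s t hst
  induction t using Fin.cases with
  | zero => exact absurd hst (Fin.not_lt_zero s)
  | succ t =>
      induction s using Fin.cases with
      | zero => simpa using ha t
      | succ s =>
          simp only [Fin.cons_succ]
          exact hf (Fin.succ_lt_succ_iff.mp hst)

lemma strictMono_snoc {k : ℕ} {f : Fin k → ℕ} (hf : StrictMono f) {a : ℕ}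
    (ha : ∀ t, f t < a) : StrictMono (Fin.snoc f a : Fin (k + 1) → ℕ) := by
  intro s t hst
  induction t using Fin.lastCases with
  | last =>
      induction s using Fin.lastCases with
      | last => exact absurd hst (lt_irrefl _)
      | cast s => simp only [Fin.snoc_castSucc, Fin.snoc_last]; exact ha s
  | cast t =>
      induction s using Fin.lastCases with
      | last => exact absurd hst (not_lt_of_gt (Fin.castSucc_lt_last t))
      | cast s =>
          simp only [Fin.snoc_castSucc]
          exact hf (Fin.castSucc_lt_castSucc_iff.mp hst)

/-- Properties of the highest alignment
`{(i^h_1,j^h_1),…,(i^h_k,j^h_k)}` of `X₁…X_n` and `Y₁…Y_n`. -/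
theorem highest_alignment_properties {A : Type*} [Fintype A] (X Y : ℕ → A) (n k : ℕ)
    (i j : Fin k → ℕ) (hH : IsHighest X Y n n k i j) :
    -- (1) aligned letters coincide
    (∀ t : Fin k, X (i t) = Y (j t)) ∧
    -- (2) `Y_{j^h_t} ≠ Y_jj` for `j^h_t < jj < j^h_{t+1}`, `t = 1,…,k-1`
    (∀ (t : ℕ) (ht : t + 1 < k), ∀ jj : ℕ,
      j ⟨t, Nat.lt_of_succ_lt ht⟩ < jj → jj < j ⟨t + 1, ht⟩ →
        Y (j ⟨t, Nat.lt_of_succ_lt ht⟩) ≠ Y jj) ∧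
    -- (3) `Y_{j^h_k} ≠ Y_jj` for `j^h_k < jj ≤ n`
    (∀ hk : 0 < k, ∀ jj : ℕ,
      j ⟨k - 1, Nat.sub_lt hk Nat.one_pos⟩ < jj → jj ≤ n →
        Y (j ⟨k - 1, Nat.sub_lt hk Nat.one_pos⟩) ≠ Y jj) ∧
    -- (4) `X_{i^h_t} ≠ X_ii` for `i^h_{t-1} < ii < i^h_t`, `t = 2,…,k`
    (∀ (t : ℕ) (ht : t + 1 < k), ∀ ii : ℕ,
      i ⟨t, Nat.lt_of_succ_lt ht⟩ < ii → ii < i ⟨t + 1, ht⟩ →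
        X (i ⟨t + 1, ht⟩) ≠ X ii) ∧
    -- (5) `X_{i^h_1} ≠ X_ii` for `1 ≤ ii < i^h_1`
    (∀ hk : 0 < k, ∀ ii : ℕ, 1 ≤ ii → ii < i ⟨0, hk⟩ → X (i ⟨0, hk⟩) ≠ X ii) ∧
    -- (6) if `i^h_1 > 1` then `X_1 ≠ Y_jj` for `1 ≤ jj < j^h_1`
    (∀ hk : 0 < k, 1 < i ⟨0, hk⟩ → ∀ jj : ℕ, 1 ≤ jj → jj < j ⟨0, hk⟩ → X 1 ≠ Y jj) ∧
    -- (7) if `j^h_1 > 1` then `Y_1 ≠ X_ii` for `1 ≤ ii < i^h_1`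
    (∀ hk : 0 < k, 1 < j ⟨0, hk⟩ → ∀ ii : ℕ, 1 ≤ ii → ii < i ⟨0, hk⟩ → Y 1 ≠ X ii) ∧
    -- (8) if `n > j^h_k` then `Y_n ≠ X_ii` for `i^h_k < ii ≤ n`
    (∀ hk : 0 < k, j ⟨k - 1, Nat.sub_lt hk Nat.one_pos⟩ < n →
      ∀ ii : ℕ, i ⟨k - 1, Nat.sub_lt hk Nat.one_pos⟩ < ii → ii ≤ n → Y n ≠ X ii) ∧
    -- (9) if `n > i^h_k` then `X_n ≠ Y_jj` for `j^h_k < jj ≤ n`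
    (∀ hk : 0 < k, i ⟨k - 1, Nat.sub_lt hk Nat.one_pos⟩ < n →
      ∀ jj : ℕ, j ⟨k - 1, Nat.sub_lt hk Nat.one_pos⟩ < jj → jj ≤ n → X n ≠ Y jj) := by
  obtain ⟨⟨hal, hlen⟩, hmax⟩ := hH
  obtain ⟨hi_mono, hj_mono, hib, hjb, hmatch⟩ := hal
  have halign : IsAlignment X Y n n k i j := ⟨hi_mono, hj_mono, hib, hjb, hmatch⟩
  refine ⟨hmatch, ?_, ?_, ?_, ?_, ?_, ?_, ?_, ?_⟩
  -- (2)
  · intro t ht jj h1 h2 heq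
    set t0 : Fin k := ⟨t, Nat.lt_of_succ_lt ht⟩ with ht0
    set t1 : Fin k := ⟨t + 1, ht⟩ with ht1
    set j' : Fin k → ℕ := fun s => if s = t0 then jj else j s with hj'
    have hmono : StrictMono j' := by
      intro a b hab
      by_cases ha : a = t0
      · subst ha
        by_cases hb : b = t0
        · exact absurd hb.symm (ne_of_lt hab)
        · simp only [hj', if_pos rfl, if_neg hb]
          have hb' : t1 ≤ b := by
            rw [Fin.lt_def] at hab; rw [Fin.le_def]; simp only [ht0, ht1] at *; omega
          exact lt_of_lt_of_le h2 (hj_mono.monotone hb')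
      · by_cases hb : b = t0
        · subst hb
          simp only [hj', if_neg ha, if_pos rfl]
          exact lt_trans (hj_mono hab) h1
        · simp only [hj', if_neg ha, if_neg hb]; exact hj_mono hab
    have hopt : IsOptimal X Y n n k i j' := by
      refine ⟨⟨hi_mono, hmono, hib, ?_, ?_⟩, hlen⟩
      · intro s
        by_cases hs : s = t0 <;> simp only [hj', if_pos, if_neg, hs]
        · have := (hjb t0).1; have := (hjb t1).2; omega
        · exact hjb s
      · intro s
        by_cases hs : s = t0 <;> simp only [hj', hs, if_pos, if_neg]
        · rw [← heq]; exact hmatch t0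
        · exact hmatch s
    have := (hmax i j' hopt t0).1
    simp only [hj', if_pos rfl] at this
    omega
  -- (3)
  · intro hk jj h1 h2 heq
    set tl : Fin k := ⟨k - 1, Nat.sub_lt hk Nat.one_pos⟩ with htl
    set j' : Fin k → ℕ := fun s => if s = tl then jj else j s with hj'
    have hmono : StrictMono j' := by
      intro a b hab
      have ha : a ≠ tl := by
        intro h; subst h; rw [Fin.lt_def] at hab
        have := b.isLt; simp only [htl] at hab; omega
      by_cases hb : b = tl
      · subst hb
        simp only [hj', if_neg ha, if_pos rfl]
        exact lt_trans (hj_mono hab) h1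
      · simp only [hj', if_neg ha, if_neg hb]; exact hj_mono hab
    have hopt : IsOptimal X Y n n k i j' := by
      refine ⟨⟨hi_mono, hmono, hib, ?_, ?_⟩, hlen⟩
      · intro s
        by_cases hs : s = tl <;> simp only [hj', if_pos, if_neg, hs]
        · have := (hjb tl).1; omega
        · exact hjb s
      · intro s
        by_cases hs : s = tl <;> simp only [hj', hs, if_pos, if_neg]
        · rw [← heq]; exact hmatch tl
        · exact hmatch s
    have := (hmax i j' hopt tl).1
    simp only [hj', if_pos rfl] at this
    omega
  -- (4)
  · intro t ht ii h1 h2 heq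
    set t0 : Fin k := ⟨t, Nat.lt_of_succ_lt ht⟩ with ht0
    set t1 : Fin k := ⟨t + 1, ht⟩ with ht1
    set i' : Fin k → ℕ := fun s => if s = t1 then ii else i s with hi'
    have hmono : StrictMono i' := by
      intro a b hab
      by_cases ha : a = t1
      · subst ha
        by_cases hb : b = t1
        · exact absurd hb.symm (ne_of_lt hab)
        · simp only [hi', if_pos rfl, if_neg hb]
          exact lt_trans h2 (hi_mono hab)
      · by_cases hb : b = t1
        · subst hb
          simp only [hi', if_neg ha, if_pos rfl]
          have ha' : a ≤ t0 := by
            rw [Fin.lt_def] at hab; rw [Fin.le_def]; simp only [ht0, ht1] at *; omega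
          exact lt_of_le_of_lt (hi_mono.monotone ha') h1
        · simp only [hi', if_neg ha, if_neg hb]; exact hi_mono hab
    have hopt : IsOptimal X Y n n k i' j := by
      refine ⟨⟨hmono, hj_mono, ?_, hjb, ?_⟩, hlen⟩
      · intro s
        by_cases hs : s = t1 <;> simp only [hi', if_pos, if_neg, hs]
        · have := (hib t0).1; have := (hib t1).2; omega
        · exact hib s
      · intro s
        by_cases hs : s = t1 <;> simp only [hi', hs, if_pos, if_neg]
        · rw [← heq]; exact hmatch t1
        · exact hmatch s
    have := (hmax i' j hopt t1).2 rfl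
    simp only [hi', if_pos rfl] at this
    omega
  -- (5)
  · intro hk ii h1 h2 heq
    set t0 : Fin k := ⟨0, hk⟩ with ht0
    set i' : Fin k → ℕ := fun s => if s = t0 then ii else i s with hi'
    have hmono : StrictMono i' := by
      intro a b hab
      have hb : b ≠ t0 := by
        intro h; subst h; rw [Fin.lt_def] at hab; simp only [ht0] at hab; omega
      by_cases ha : a = t0
      · subst ha
        simp only [hi', if_pos rfl, if_neg hb]
        exact lt_trans h2 (hi_mono hab)
      · simp only [hi', if_neg ha, if_neg hb]; exact hi_mono hab
    have hopt : IsOptimal X Y n n k i' j := by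
      refine ⟨⟨hmono, hj_mono, ?_, hjb, ?_⟩, hlen⟩
      · intro s
        by_cases hs : s = t0 <;> simp only [hi', if_pos, if_neg, hs]
        · have := (hib t0).2; omega
        · exact hib s
      · intro s
        by_cases hs : s = t0 <;> simp only [hi', hs, if_pos, if_neg]
        · rw [← heq]; exact hmatch t0
        · exact hmatch s
    have := (hmax i' j hopt t0).2 rfl
    simp only [hi', if_pos rfl] at this
    omega
  -- (6)
  · intro hk hi1 jj hjj1 hjj2 heq
    set t0 : Fin k := ⟨0, hk⟩ with ht0
    have hle : ∀ t : Fin k, t0 ≤ t := by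
      intro t; rw [Fin.le_def]; simp [ht0]
    have halign' : IsAlignment X Y n n (k + 1) (Fin.cons 1 i) (Fin.cons jj j) := by
      refine ⟨strictMono_cons hi_mono ?_, strictMono_cons hj_mono ?_, ?_, ?_, ?_⟩
      · exact fun t => lt_of_lt_of_le hi1 (hi_mono.monotone (hle t))
      · exact fun t => lt_of_lt_of_le hjj2 (hj_mono.monotone (hle t))
      · intro t
        induction t using Fin.cases with
        | zero =>
            simp only [Fin.cons_zero]
            have := (hib t0).2; omega
        | succ t => simp only [Fin.cons_succ]; exact hib t
      · intro t
        induction t using Fin.cases with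
        | zero =>
            simp only [Fin.cons_zero]
            have := (hjb t0).2; omega
        | succ t => simp only [Fin.cons_succ]; exact hjb t
      · intro t
        induction t using Fin.cases with
        | zero => simpa only [Fin.cons_zero] using heq
        | succ t => simp only [Fin.cons_succ]; exact hmatch t
    have := le_lcsLen halign'
    omega
  -- (7)
  · intro hk hj1 ii hii1 hii2 heq
    set t0 : Fin k := ⟨0, hk⟩ with ht0
    have hle : ∀ t : Fin k, t0 ≤ t := by
      intro t; rw [Fin.le_def]; simp [ht0]
    have halign' : IsAlignment X Y n n (k + 1) (Fin.cons ii i) (Fin.cons 1 j) := by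
      refine ⟨strictMono_cons hi_mono ?_, strictMono_cons hj_mono ?_, ?_, ?_, ?_⟩
      · exact fun t => lt_of_lt_of_le hii2 (hi_mono.monotone (hle t))
      · exact fun t => lt_of_lt_of_le hj1 (hj_mono.monotone (hle t))
      · intro t
        induction t using Fin.cases with
        | zero =>
            simp only [Fin.cons_zero]
            have := (hib t0).2; omega
        | succ t => simp only [Fin.cons_succ]; exact hib t
      · intro t
        induction t using Fin.cases with
        | zero =>
            simp only [Fin.cons_zero]
            have := (hjb t0).2; omega
        | succ t => simp only [Fin.cons_succ]; exact hjb t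
      · intro t
        induction t using Fin.cases with
        | zero => simpa only [Fin.cons_zero] using heq.symm
        | succ t => simp only [Fin.cons_succ]; exact hmatch t
    have := le_lcsLen halign'
    omega
  -- (8)
  · intro hk h1 ii hii1 hii2 heq
    set tl : Fin k := ⟨k - 1, Nat.sub_lt hk Nat.one_pos⟩ with htl
    have hle : ∀ t : Fin k, t ≤ tl := by
      intro t; rw [Fin.le_def]; have := t.isLt; simp only [htl]; omega
    have halign' : IsAlignment X Y n n (k + 1) (Fin.snoc i ii) (Fin.snoc j n) := by
      refine ⟨strictMono_snoc hi_mono ?_, strictMono_snoc hj_mono ?_, ?_, ?_, ?_⟩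
      · exact fun t => lt_of_le_of_lt (hi_mono.monotone (hle t)) hii1
      · exact fun t => lt_of_le_of_lt (hj_mono.monotone (hle t)) h1
      · intro t
        induction t using Fin.lastCases with
        | last =>
            simp only [Fin.snoc_last]
            have := (hib tl).1; omega
        | cast t => simp only [Fin.snoc_castSucc]; exact hib t
      · intro t
        induction t using Fin.lastCases with
        | last =>
            simp only [Fin.snoc_last]
            have := (hjb tl).1; omega
        | cast t => simp only [Fin.snoc_castSucc]; exact hjb t
      · intro t
        induction t using Fin.lastCases with
        | last => simpa only [Fin.snoc_last] using heq.symm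
        | cast t => simp only [Fin.snoc_castSucc]; exact hmatch t
    have := le_lcsLen halign'
    omega
  -- (9)
  · intro hk h1 jj hjj1 hjj2 heq
    set tl : Fin k := ⟨k - 1, Nat.sub_lt hk Nat.one_pos⟩ with htl
    have hle : ∀ t : Fin k, t ≤ tl := by
      intro t; rw [Fin.le_def]; have := t.isLt; simp only [htl]; omega
    have halign' : IsAlignment X Y n n (k + 1) (Fin.snoc i n) (Fin.snoc j jj) := by
      refine ⟨strictMono_snoc hi_mono ?_, strictMono_snoc hj_mono ?_, ?_, ?_, ?_⟩
      · exact fun t => lt_of_le_of_lt (hi_mono.monotone (hle t)) h1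
      · exact fun t => lt_of_le_of_lt (hj_mono.monotone (hle t)) hjj1
      · intro t
        induction t using Fin.lastCases with
        | last =>
            simp only [Fin.snoc_last]
            have := (hib tl).1; omega
        | cast t => simp only [Fin.snoc_castSucc]; exact hib t
      · intro t
        induction t using Fin.lastCases with
        | last =>
            simp only [Fin.snoc_last]
            have := (hjb tl).1; omega
        | cast t => simp only [Fin.snoc_castSucc]; exact hjb t
      · intro t
        induction t using Fin.lastCases with
        | last => simpa only [Fin.snoc_last] using heq
        | cast t => simp only [Fin.snoc_castSucc]; exact hmatch t
    have := le_lcsLen halign'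
    omega

end PaperLCS
end
end

section
/- Let X_1,…,X_n and Y_1,…,Y_n be independent i.i.d. sequences over a finite alphabet with the same distribution. Let v be an alignment of length k with aligned index pairs (i_1,j_1),…,(i_k,j_k), and let B(v) be the event that v is the highest optimal alignment of X and Y. Then P(B(v)) ≤ p_o^k · q^{2(n−k)−(j_1−1)−(n−i_k)}. -/
open MeasureTheory ProbabilityTheory Filter Set
open scoped ENNReal NNReal Topology

noncomputable section

namespace PaperLCS

variable {A : Type*}

variable {Ω : Type*} [MeasurableSpace Ω] {μ : MeasureTheory.Measure Ω}
variable {A : Type*} [Fintype A] [Nonempty A] [MeasurableSpace A] [MeasurableSingletonClass A]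

/-- `p_a := P(X₁ = a)` expressed via the common one-letter distribution `ν`. -/
def pLetter (ν : MeasureTheory.Measure A) (a : A) : ℝ := (ν {a}).toReal

/-- `p_o := Σ_a p_a²`. -/
def pMatch (ν : MeasureTheory.Measure A) : ℝ := ∑ a : A, (pLetter ν a) ^ 2

/-- `q := 1 - min_a p_a`. -/
def qConst (ν : MeasureTheory.Measure A) : ℝ :=
  1 - Finset.univ.inf' Finset.univ_nonempty (pLetter ν)

/-!
Write `x_t = X_{i_t} = Y_{j_t}` for the aligned letters. If `v` is the highest optimal alignment,
then no position `p` of `X` with `i_{t-1} < p < i_t` carries the letter `x_t`, for otherwise `i_t`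
could be lowered to `p`; symmetrically no position `p` of `Y` with `j_t < p < j_{t+1}` carries
`x_t`, for otherwise `j_t` could be raised to `p`. Hence `B(v)` is contained in the union over
`x ∈ A^k` of the events in which the `2k` aligned positions carry the letters `x_t` and each of the
`(i_k - k) + (n - j_1 + 1 - k)` other positions of `X_1 … X_{i_k}` and `Y_{j_1} … Y_n` avoids one
prescribed letter. By independence such an event has probability at most
`∏_t p_{x_t}^2 · q^{(i_k - k) + (n - j_1 + 1 - k)}`, and summing over `x` gives `p_o^k q^{…}`.
-/

open Finset

theorem _root_.StrictMono.update_of_lt_of_lt {ι β : Type*} [Preorder ι] [DecidableEq ι]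
    [Preorder β] {f : ι → β} (hf : StrictMono f) {t : ι} {p : β} (hlt : ∀ s < t, f s < p)
    (hgt : ∀ s, t < s → p < f s) : StrictMono (Function.update f t p) := by
  intro a b hab
  rcases eq_or_ne a t with rfl | ha
  · simpa [hab.ne'] using hgt b hab
  rcases eq_or_ne b t with rfl | hb
  · simpa [ha] using hlt a hab
  simpa [ha, hb] using hf hab

theorem _root_.Finset.prod_le_prod_mul_pow_card_sub {ι κ M : Type*} [Fintype ι] [DecidableEq κ]
    [CommMonoid M] [PartialOrder M] [IsOrderedMonoid M] {f : ι → κ} (hf : f.Injective)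
    {S : Finset κ} (hfS : ∀ t, f t ∈ S) {g : κ → M} {a : ι → M} {q : M}
    (ha : ∀ t, g (f t) ≤ a t) (hq : ∀ p ∈ S, p ∉ Set.range f → g p ≤ q) :
    ∏ p ∈ S, g p ≤ (∏ t, a t) * q ^ (#S - Fintype.card ι) := by
  have hsub : Finset.univ.image f ⊆ S := by simpa [Finset.image_subset_iff] using hfS
  have hcard : #(S \ Finset.univ.image f) = #S - Fintype.card ι := by
    rw [card_sdiff_of_subset hsub, card_image_of_injective _ hf, card_univ]
  rw [← prod_sdiff hsub, mul_comm, prod_image hf.injOn, ← hcard]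
  refine mul_le_mul' (prod_le_prod' fun t _ => ha t) (prod_le_pow_card _ _ _ fun p hp => ?_)
  rw [Finset.mem_sdiff, Finset.mem_image] at hp
  exact hq p hp.1 fun ⟨t, ht⟩ => hp.2 ⟨t, mem_univ t, ht⟩

section Alignment

variable {α : Type*} {X Y : ℕ → α} {nx ny k : ℕ} {i j : Fin k → ℕ}

theorem IsAlignment.update_left (h : IsAlignment X Y nx ny k i j) {t : Fin k} {p : ℕ}
    (hmono : StrictMono (Function.update i t p)) (hp : 1 ≤ p ∧ p ≤ nx) (hXY : X p = Y (j t)) :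
    IsAlignment X Y nx ny k (Function.update i t p) j := by
  obtain ⟨-, hj, hib, hjb, hmatch⟩ := h
  refine ⟨hmono, hj, fun s => ?_, hjb, fun s => ?_⟩ <;> rcases eq_or_ne s t with rfl | hs
  · simpa using hp
  · simpa [hs] using hib s
  · simpa using hXY
  · simpa [hs] using hmatch s

theorem IsAlignment.update_right (h : IsAlignment X Y nx ny k i j) {t : Fin k} {p : ℕ}
    (hmono : StrictMono (Function.update j t p)) (hp : 1 ≤ p ∧ p ≤ ny) (hXY : X (i t) = Y p) :
    IsAlignment X Y nx ny k i (Function.update j t p) := by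
  obtain ⟨hi, -, hib, hjb, hmatch⟩ := h
  refine ⟨hi, hmono, hib, fun s => ?_, fun s => ?_⟩ <;> rcases eq_or_ne s t with rfl | hs
  · simpa using hp
  · simpa [hs] using hjb s
  · simpa using hXY
  · simpa [hs] using hmatch s

theorem IsHighest.left_ne_of_lt (h : IsHighest X Y nx ny k i j) {t : Fin k} {p : ℕ}
    (hp : 1 ≤ p) (hlt : p < i t) (hprev : ∀ s < t, i s < p) : X p ≠ Y (j t) := by
  intro hXY
  obtain ⟨⟨hal, hopt⟩, hmax⟩ := h
  have hmono := hal.1.update_of_lt_of_lt hprev fun s hs => hlt.trans (hal.1 hs)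
  have hal' := hal.update_left hmono ⟨hp, hlt.le.trans (hal.2.2.1 t).2⟩ hXY
  have hle : i t ≤ p := by simpa using (hmax _ j ⟨hal', hopt⟩ t).2 rfl
  exact hlt.not_ge hle

theorem IsHighest.right_ne_of_gt (h : IsHighest X Y nx ny k i j) {t : Fin k} {p : ℕ}
    (hp : p ≤ ny) (hgt : j t < p) (hnext : ∀ s, t < s → p < j s) : Y p ≠ X (i t) := by
  intro hYX
  obtain ⟨⟨hal, hopt⟩, hmax⟩ := h
  have hmono := hal.2.1.update_of_lt_of_lt (fun s hs => (hal.2.1 hs).trans hgt) hnext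
  have hal' := hal.update_right hmono ⟨(hal.2.2.2.1 t).1.trans hgt.le, hp⟩ hYX.symm
  have hle : p ≤ j t := by simpa using (hmax i _ ⟨hal', hopt⟩ t).1
  exact hgt.not_ge hle

/- The letters that a highest alignment with aligned letters `x` permits at position `p` of `X`
(`leftConstraint`) and of `Y` (`rightConstraint`). -/
def leftConstraint (i : Fin k → ℕ) (x : Fin k → α) (p : ℕ) : Set α :=
  {a | ∀ t, (p = i t → a = x t) ∧ (p < i t → (∀ s < t, i s < p) → a ≠ x t)}

def rightConstraint (j : Fin k → ℕ) (x : Fin k → α) (p : ℕ) : Set α :=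
  {a | ∀ t, (p = j t → a = x t) ∧ (j t < p → (∀ s, t < s → p < j s) → a ≠ x t)}

def alignConstraint (i j : Fin k → ℕ) (x : Fin k → α) : ℕ ⊕ ℕ → Set α :=
  Sum.elim (leftConstraint i x) (rightConstraint j x)

theorem leftConstraint_apply_subset (x : Fin k → α) (t : Fin k) :
    leftConstraint i x (i t) ⊆ {x t} :=
  fun _ ha => (ha t).1 rfl

theorem rightConstraint_apply_subset (x : Fin k → α) (t : Fin k) :
    rightConstraint j x (j t) ⊆ {x t} :=
  fun _ ha => (ha t).1 rfl

theorem exists_leftConstraint_subset_compl (x : Fin k → α) {p : ℕ} (hp : ∃ t, p ≤ i t)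
    (hpi : p ∉ Set.range i) : ∃ t, leftConstraint i x p ⊆ {x t}ᶜ := by
  obtain ⟨t, ht, hmin⟩ := wellFounded_lt.has_min {t | p ≤ i t} hp
  refine ⟨t, fun a ha => (ha t).2 (ht.lt_of_ne fun h => hpi ⟨t, h.symm⟩) fun s hs => ?_⟩
  exact not_le.1 fun h => hmin s h hs

theorem exists_rightConstraint_subset_compl (x : Fin k → α) {p : ℕ} (hp : ∃ t, j t ≤ p)
    (hpj : p ∉ Set.range j) : ∃ t, rightConstraint j x p ⊆ {x t}ᶜ := by
  obtain ⟨t, ht, hmax⟩ := wellFounded_gt.has_min {t | j t ≤ p} hp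
  refine ⟨t, fun a ha => (ha t).2 (ht.lt_of_ne fun h => hpj ⟨t, h⟩) fun s hs => ?_⟩
  exact not_le.1 fun h => hmax s h hs

theorem IsHighest.mem_alignConstraint (h : IsHighest X Y nx ny k i j) {m m' : ℕ} {c : ℕ ⊕ ℕ}
    (hc : c ∈ (Finset.Icc 1 m).disjSum (Finset.Icc m' ny)) :
    Sum.elim X Y c ∈ alignConstraint i j (fun t => X (i t)) c := by
  have hmatch := h.1.1.2.2.2.2
  rcases c with p | p
  · have hp := (Finset.mem_Icc.1 (Finset.inl_mem_disjSum.1 hc)).1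
    refine fun t => ⟨fun hpt => hpt ▸ rfl, fun hlt hprev => ?_⟩
    show X p ≠ X (i t)
    rw [hmatch t]
    exact h.left_ne_of_lt hp hlt hprev
  · have hp := (Finset.mem_Icc.1 (Finset.inr_mem_disjSum.1 hc)).2
    exact fun t => ⟨fun hpt => hpt ▸ (hmatch t).symm, h.right_ne_of_gt hp⟩

end Alignment

theorem _root_.ProbabilityTheory.iIndepFun.measure_biInter_preimage_eq_prod {ι β : Type*}
    [MeasurableSpace β] {Z : ι → Ω → β} {ν : Measure β}
    (hZ : iIndepFun Z μ) (hm : ∀ c, Measurable (Z c)) (hd : ∀ c, μ.map (Z c) = ν)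
    (S : Finset ι) {T : ι → Set β} (hT : ∀ c, MeasurableSet (T c)) :
    μ (⋂ c ∈ S, Z c ⁻¹' T c) = ∏ c ∈ S, ν (T c) := by
  rw [hZ.meas_biInter fun c _ => ⟨T c, hT c, rfl⟩]
  exact Finset.prod_congr rfl fun c _ => by rw [← hd c, Measure.map_apply (hm c) (hT c)]

omit [MeasurableSingletonClass A] in
theorem qConst_nonneg (ν : Measure A) [IsProbabilityMeasure ν] : 0 ≤ qConst ν := by
  obtain ⟨a⟩ := ‹Nonempty A›
  have hle : pLetter ν a ≤ 1 :=
    ENNReal.toReal_le_of_le_ofReal zero_le_one (by simp [prob_le_one])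
  rw [qConst]
  linarith [Finset.inf'_le (pLetter ν) (Finset.mem_univ a)]

theorem measure_compl_singleton_le_qConst (ν : Measure A) [IsProbabilityMeasure ν] (a : A) :
    ν {a}ᶜ ≤ ENNReal.ofReal (qConst ν) := by
  rw [prob_compl_eq_one_sub (measurableSet_singleton a),
    ← ENNReal.ofReal_toReal (measure_ne_top ν {a}), ← ENNReal.ofReal_one,
    ← ENNReal.ofReal_sub _ ENNReal.toReal_nonneg]
  exact ENNReal.ofReal_le_ofReal
    (sub_le_sub_left (Finset.inf'_le (pLetter ν) (Finset.mem_univ a)) 1)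

omit [Nonempty A] [MeasurableSingletonClass A] in
theorem ofReal_pMatch (ν : Measure A) [IsFiniteMeasure ν] :
    ENNReal.ofReal (pMatch ν) = ∑ a, ν {a} ^ 2 := by
  rw [pMatch, ENNReal.ofReal_sum_of_nonneg fun a _ => sq_nonneg _]
  refine Finset.sum_congr rfl fun a _ => ?_
  rw [pLetter, ENNReal.ofReal_pow ENNReal.toReal_nonneg,
    ENNReal.ofReal_toReal (measure_ne_top ν _)]

theorem prod_measure_alignConstraint_le (ν : Measure A) [IsProbabilityMeasure ν] {k : ℕ}
    {i j : Fin k → ℕ} (hi : i.Injective) (hj : j.Injective) {SX SY : Finset ℕ}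
    (hiSX : ∀ t, i t ∈ SX) (hjSY : ∀ t, j t ∈ SY) (hSX : ∀ p ∈ SX, ∃ t, p ≤ i t)
    (hSY : ∀ p ∈ SY, ∃ t, j t ≤ p) (x : Fin k → A) :
    ∏ c ∈ SX.disjSum SY, ν (alignConstraint i j x c) ≤
      (∏ t, ν {x t} ^ 2) * ENNReal.ofReal (qConst ν) ^ (#SX - k + (#SY - k)) := by
  have hX := Finset.prod_le_prod_mul_pow_card_sub hi hiSX (g := fun p => ν (leftConstraint i x p))
    (fun t => measure_mono (leftConstraint_apply_subset x t)) fun p hp hpi =>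
      let ⟨t, ht⟩ := exists_leftConstraint_subset_compl x (hSX p hp) hpi
      (measure_mono ht).trans (measure_compl_singleton_le_qConst ν (x t))
  have hY := Finset.prod_le_prod_mul_pow_card_sub hj hjSY (g := fun p => ν (rightConstraint j x p))
    (fun t => measure_mono (rightConstraint_apply_subset x t)) fun p hp hpj =>
      let ⟨t, ht⟩ := exists_rightConstraint_subset_compl x (hSY p hp) hpj
      (measure_mono ht).trans (measure_compl_singleton_le_qConst ν (x t))
  rw [Fintype.card_fin] at hX hY
  calc _ = (∏ p ∈ SX, ν (leftConstraint i x p)) * ∏ p ∈ SY, ν (rightConstraint j x p) :=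
        Finset.prod_disjSum _ _ _
    _ ≤ _ := mul_le_mul' hX hY
    _ = _ := by rw [Finset.prod_pow, pow_add]; ring

omit [Nonempty A] in
theorem measure_setOf_isHighest_le_sum_prod (X Y : ℕ → Ω → A) (ν : Measure A)
    (hmX : ∀ i, Measurable (X i)) (hmY : ∀ i, Measurable (Y i))
    (hindep : iIndepFun (Sum.elim X Y) μ) (hdX : ∀ i, μ.map (X i) = ν)
    (hdY : ∀ i, μ.map (Y i) = ν) {nx ny k : ℕ} (i j : Fin k → ℕ) (m m' : ℕ) :
    μ {ω | IsHighest (fun t => X t ω) (fun t => Y t ω) nx ny k i j} ≤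
      ∑ x : Fin k → A, ∏ c ∈ (Finset.Icc 1 m).disjSum (Finset.Icc m' ny),
        ν (alignConstraint i j x c) := by
  have hsub : {ω | IsHighest (fun t => X t ω) (fun t => Y t ω) nx ny k i j} ⊆
      ⋃ x : Fin k → A, ⋂ c ∈ (Finset.Icc 1 m).disjSum (Finset.Icc m' ny),
        Sum.elim X Y c ⁻¹' alignConstraint i j x c :=
    fun ω h => Set.mem_iUnion.2 ⟨_, Set.mem_iInter₂.2 fun c hc => by
      rcases c with p | p <;> exact h.mem_alignConstraint hc⟩
  refine (measure_mono hsub).trans ((measure_iUnion_fintype_le _ _).trans_eq ?_)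
  simp_rw [hindep.measure_biInter_preimage_eq_prod (Sum.forall.2 ⟨hmX, hmY⟩)
    (Sum.forall.2 ⟨hdX, hdY⟩) _ fun _ => .of_discrete]

omit [MeasurableSingletonClass A] in
theorem sum_prod_sq_mul_pow_eq_ofReal (ν : Measure A) [IsProbabilityMeasure ν] (k e : ℕ) :
    ∑ x : Fin k → A, (∏ t, ν {x t} ^ 2) * ENNReal.ofReal (qConst ν) ^ e =
      ENNReal.ofReal (pMatch ν ^ k * qConst ν ^ (e : ℝ)) := by
  have hp : 0 ≤ pMatch ν := Finset.sum_nonneg fun _ _ => sq_nonneg _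
  rw [← Finset.sum_mul, ← Fintype.prod_sum (fun (_ : Fin k) (a : A) => ν {a} ^ 2),
    Fin.prod_const, ← ofReal_pMatch, Real.rpow_natCast, ENNReal.ofReal_mul (pow_nonneg hp k),
    ENNReal.ofReal_pow hp, ENNReal.ofReal_pow (qConst_nonneg ν)]

theorem highest_alignment_prob_bound_general
    (X Y : ℕ → Ω → A) (ν : MeasureTheory.Measure A) [MeasureTheory.IsProbabilityMeasure ν]
    (hmX : ∀ i, Measurable (X i)) (hmY : ∀ i, Measurable (Y i))
    (hindep : iIndepFun
      (Sum.elim X Y) μ)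
    (hdX : ∀ i, μ.map (X i) = ν) (hdY : ∀ i, μ.map (Y i) = ν)
    (n k : ℕ) (hk : 0 < k) (i j : Fin k → ℕ)
    (hi : StrictMono i) (hj : StrictMono j)
    (hib : ∀ t, 1 ≤ i t ∧ i t ≤ n) (hjb : ∀ t, 1 ≤ j t ∧ j t ≤ n) :
    μ {ω | IsHighest (fun t => X t ω) (fun t => Y t ω) n n k i j} ≤
      ENNReal.ofReal ((pMatch ν) ^ k *
        (qConst ν) ^ (2 * ((n : ℝ) - k) - ((j ⟨0, hk⟩ : ℝ) - 1)
          - ((n : ℝ) - (i ⟨k - 1, Nat.sub_lt hk Nat.one_pos⟩ : ℝ)))) := by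
  classical
  set t₀ : Fin k := ⟨0, hk⟩
  set t₁ : Fin k := ⟨k - 1, Nat.sub_lt hk Nat.one_pos⟩
  set SX := Finset.Icc 1 (i t₁)
  set SY := Finset.Icc (j t₀) n
  have hiSX : ∀ t, i t ∈ SX := fun t =>
    Finset.mem_Icc.2 ⟨(hib t).1, hi.monotone (Fin.le_def.2 (by simp [t₁]; omega))⟩
  have hjSY : ∀ t, j t ∈ SY := fun t =>
    Finset.mem_Icc.2 ⟨hj.monotone (Fin.le_def.2 (Nat.zero_le _)), (hjb t).2⟩
  have hkX : k ≤ #SX := by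
    simpa using card_le_card_of_injOn (s := univ) i (fun t _ => hiSX t) hi.injective.injOn
  have hkY : k ≤ #SY := by
    simpa using card_le_card_of_injOn (s := univ) j (fun t _ => hjSY t) hj.injective.injOn
  have hexp : ((#SX - k + (#SY - k) : ℕ) : ℝ) =
      2 * ((n : ℝ) - k) - ((j t₀ : ℝ) - 1) - ((n : ℝ) - (i t₁ : ℝ)) := by
    have hj₀ := (hjb t₀).2
    simp only [SX, SY, Nat.card_Icc, Nat.add_sub_cancel] at hkX hkY ⊢
    push_cast [Nat.cast_sub hkX, Nat.cast_sub hkY, Nat.cast_sub (by omega : j t₀ ≤ n + 1)]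
    ring
  calc _ ≤ _ :=
        measure_setOf_isHighest_le_sum_prod X Y ν hmX hmY hindep hdX hdY i j (i t₁) (j t₀)
    _ ≤ _ := Finset.sum_le_sum fun x _ => prod_measure_alignConstraint_le ν hi.injective
        hj.injective hiSX hjSY (fun p hp => ⟨t₁, (Finset.mem_Icc.1 hp).2⟩)
        (fun p hp => ⟨t₀, (Finset.mem_Icc.1 hp).1⟩) x
    _ = _ := by rw [sum_prod_sq_mul_pow_eq_ofReal, hexp]

/-- For two independent i.i.d. sequences with common one-letter
distribution `ν`, and a fixed alignment pattern `v` of length `k` with pairs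
`(i₁,j₁),…,(i_k,j_k)`, the probability of the event `B(v)` that `v` is the highest
optimal alignment of `X` and `Y` satisfies
`P(B(v)) ≤ p_o^k · q^{2(n-k)-(j₁-1)-(n-i_k)}`. -/
theorem highest_alignment_prob_bound [MeasureTheory.IsProbabilityMeasure μ]
    (X Y : ℕ → Ω → A) (ν : MeasureTheory.Measure A) [MeasureTheory.IsProbabilityMeasure ν]
    (hmX : ∀ i, Measurable (X i)) (hmY : ∀ i, Measurable (Y i))
    (hindep : iIndepFun
      (Sum.elim X Y) μ)
    (hdX : ∀ i, μ.map (X i) = ν) (hdY : ∀ i, μ.map (Y i) = ν)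
    (n k : ℕ) (hk : 0 < k) (i j : Fin k → ℕ)
    (hi : StrictMono i) (hj : StrictMono j)
    (hib : ∀ t, 1 ≤ i t ∧ i t ≤ n) (hjb : ∀ t, 1 ≤ j t ∧ j t ≤ n) :
    μ {ω | IsHighest (fun t => X t ω) (fun t => Y t ω) n n k i j} ≤
      ENNReal.ofReal ((pMatch ν) ^ k *
        (qConst ν) ^ (2 * ((n : ℝ) - k) - ((j ⟨0, hk⟩ : ℝ) - 1)
          - ((n : ℝ) - (i ⟨k - 1, Nat.sub_lt hk Nat.one_pos⟩ : ℝ)))) :=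
  highest_alignment_prob_bound_general X Y ν hmX hmY hindep hdX hdY n k hk i j hi hj hib hjb

end PaperLCS
end
end
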